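/- Let R be a commutative ℚ-algebra, d a natural number, λ₁,…,λ_d ∈ R, and f ∈ R[[X]] with constant coefficient 0, so that exp(f) := ∑_{n≥0} fⁿ/n! is a well-defined power series. With C := ∏_{i=1}^d (1 − λᵢX) and C′ its formal derivative, one has ∏_{i=1}^d (exp f)(λᵢX) = exp( f ⊙ (−X·C′·C⁻¹) ), where (exp f)(λX) denotes the rescaled series and ⊙ denotes the Hadamard product (note f ⊙ (−X·C′·C⁻¹) also has constant coefficient 0, so the right-hand exponential is defined). -/

import Mathlib

/-!
Rescaling commutes with `exp`, and `exp` turns sums of series without constant term into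
products, because `exp f` is the unique solution of `E' = f' E` with `E(0) = 1`. Hence the
left-hand side is `exp (∑ᵢ f(λᵢ X))`. On the other side, `-X C'/C = ∑ᵢ λᵢX/(1 - λᵢX)` is the
series `∑_{n ≥ 1} (∑ᵢ λᵢⁿ) Xⁿ` of power sums, and its Hadamard product with `f` is `∑ᵢ f(λᵢ X)`.
-/

open PowerSeries

/-- The Hadamard product of two formal power series:
`(∑ aₙ Xⁿ) ⊙ (∑ bₙ Xⁿ) := ∑ aₙ bₙ Xⁿ`. -/
noncomputable def hadamard {R : Type*} [CommRing R] (f g : PowerSeries R) : PowerSeries R :=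
  PowerSeries.mk fun n => PowerSeries.coeff n f * PowerSeries.coeff n g

/-- The exponential `exp(f) = ∑_{n ≥ 0} fⁿ/n!` of a power series `f` over a commutative
`ℚ`-algebra.  When `f` has zero constant coefficient, `coeff k (f ^ n) = 0` for `n > k`,
so the (X-adically convergent) sum can be computed coefficientwise by the finite sum
`coeff k (exp f) = ∑_{n ≤ k} (1/n!) • coeff k (f ^ n)`, which is what we use as the
definition. -/
noncomputable def expPS {R : Type*} [CommRing R] [Algebra ℚ R] (f : PowerSeries R) :
    PowerSeries R :=
  PowerSeries.mk fun k =>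
    ∑ n ∈ Finset.range (k + 1), (n.factorial : ℚ)⁻¹ • PowerSeries.coeff k (f ^ n)

open Finset

theorem Derivation.apply_prod_eq_prod_mul_sum {R A : Type*} [CommSemiring R] [CommRing A]
    [Algebra R A] (D : Derivation R A A) {ι : Type*} (s : Finset ι) {F G : ι → A}
    (hFG : ∀ i ∈ s, F i * G i = 1) :
    D (∏ i ∈ s, F i) = (∏ i ∈ s, F i) * ∑ i ∈ s, D (F i) * G i := by
  induction s using Finset.cons_induction with
  | empty => simp
  | cons a s ha ih =>
    rw [prod_cons, sum_cons, D.leibniz, ih fun i hi => hFG i (mem_cons_of_mem hi), smul_eq_mul,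
      smul_eq_mul]
    linear_combination -(∏ i ∈ s, F i) * D (F a) * hFG a (mem_cons_self a s)

namespace PowerSeries

variable {R : Type*} [CommRing R]

theorem coeff_pow_eq_zero_of_lt {f : R⟦X⟧} (hf : constantCoeff f = 0) {k n : ℕ} (h : k < n) :
    coeff k (f ^ n) = 0 :=
  X_pow_dvd_iff.mp (pow_dvd_pow_of_dvd (X_dvd_iff.mpr hf) n) k h

theorem one_sub_C_mul_X_mul_rescale_mk_one (a : R) :
    (1 - C a * X) * rescale a (mk 1) = 1 := by
  simpa [mul_comm] using congrArg (rescale a) (mk_one_mul_one_sub_eq_one (S := R))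

theorem constantCoeff_rescale (a : R) (f : R⟦X⟧) :
    constantCoeff (rescale a f) = constantCoeff f := by
  rw [← coeff_zero_eq_constantCoeff_apply, coeff_rescale, pow_zero, one_mul,
    coeff_zero_eq_constantCoeff_apply]

theorem neg_X_mul_derivative_prod_one_sub_C_mul_X {ι : Type*} (s : Finset ι) (lam : ι → R) :
    -X * d⁄dX R (∏ i ∈ s, (1 - C (lam i) * X)) =
      (∏ i ∈ s, (1 - C (lam i) * X)) * ∑ i ∈ s, (rescale (lam i) (mk 1) - 1) := by
  rw [(d⁄dX R).apply_prod_eq_prod_mul_sum s fun i _ => one_sub_C_mul_X_mul_rescale_mk_one (lam i),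
    mul_left_comm]
  congr 1
  rw [mul_sum]
  refine sum_congr rfl fun i _ => ?_
  have hgeom := one_sub_C_mul_X_mul_rescale_mk_one (lam i)
  simp only [map_sub, derivative_one, Derivation.leibniz, derivative_C, derivative_X,
    smul_eq_mul]
  linear_combination -hgeom

theorem eq_of_derivative_eq_mul [IsAddTorsionFree R] {E : R⟦X⟧} {F : R⟦X⟧ˣ} {h : R⟦X⟧}
    (hE : d⁄dX R E = h * E) (hF : d⁄dX R F = h * F)
    (hc : constantCoeff E = constantCoeff (F : R⟦X⟧)) : E = F := by
  have hquot : d⁄dX R (E * (↑F⁻¹ : R⟦X⟧)) = d⁄dX R (F * ↑F⁻¹ : R⟦X⟧) := by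
    rw [Units.mul_inv, derivative_one, Derivation.leibniz, derivative_inv, hE, hF, smul_eq_mul,
      smul_eq_mul]
    linear_combination (-(h * E * ↑F⁻¹ : R⟦X⟧)) * F.mul_inv
  have hconst : constantCoeff (E * (↑F⁻¹ : R⟦X⟧)) = constantCoeff (F * ↑F⁻¹ : R⟦X⟧) := by
    rw [map_mul, map_mul, hc]
  simpa using congrArg (· * (F : R⟦X⟧)) (derivative.ext hquot hconst)

end PowerSeries

section Hadamard

variable {R : Type*} [CommRing R]

theorem hadamard_sum_right {ι : Type*} (s : Finset ι) (f : R⟦X⟧) (g : ι → R⟦X⟧) :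
    hadamard f (∑ i ∈ s, g i) = ∑ i ∈ s, hadamard f (g i) := by
  ext n
  simp [hadamard, map_sum, mul_sum]

theorem hadamard_sub_right (f g h : R⟦X⟧) :
    hadamard f (g - h) = hadamard f g - hadamard f h := by
  ext n
  simp [hadamard, mul_sub]

theorem hadamard_one_right (f : R⟦X⟧) : hadamard f 1 = C (constantCoeff f) := by
  ext n
  rcases n with _ | n <;> simp [hadamard, coeff_one, coeff_C]

theorem hadamard_rescale_mk_one_right (f : R⟦X⟧) (a : R) :
    hadamard f (rescale a (mk 1)) = rescale a f := by
  ext n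
  simp [hadamard, coeff_rescale, mul_comm]

end Hadamard

section Exp

variable {R : Type*} [CommRing R] [Algebra ℚ R]

theorem constantCoeff_expPS (f : R⟦X⟧) : constantCoeff (expPS f) = 1 := by
  rw [← coeff_zero_eq_constantCoeff_apply]
  simp [expPS]

theorem expPS_eq_subst_exp {f : R⟦X⟧} (hf : constantCoeff f = 0) :
    expPS f = (exp R).subst f := by
  ext k
  rw [coeff_subst' (HasSubst.of_constantCoeff_zero' hf), expPS, coeff_mk,
    finsum_eq_sum_of_support_subset (s := range (k + 1))]
  · refine sum_congr rfl fun n _ => ?_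
    rw [coeff_exp, one_div, algebraMap_smul]
  · intro n hn
    simp only [Function.mem_support, coe_range, Set.mem_Iio] at hn ⊢
    by_contra hk
    exact hn (by rw [coeff_pow_eq_zero_of_lt hf (by omega), smul_zero])

theorem derivative_expPS {f : R⟦X⟧} (hf : constantCoeff f = 0) :
    d⁄dX R (expPS f) = expPS f * d⁄dX R f := by
  rw [expPS_eq_subst_exp hf, derivative_subst (HasSubst.of_constantCoeff_zero' hf),
    derivative_exp]

theorem expPS_add {f g : R⟦X⟧} (hf : constantCoeff f = 0) (hg : constantCoeff g = 0) :
    expPS (f + g) = expPS f * expPS g := by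
  have : IsAddTorsionFree R := IsAddTorsionFree.of_module_rat R
  have hfg : constantCoeff (f + g) = 0 := by rw [map_add, hf, hg, add_zero]
  have hunit : IsUnit (expPS f * expPS g) :=
    isUnit_iff_constantCoeff.mpr (by simp [constantCoeff_expPS])
  refine eq_of_derivative_eq_mul (F := hunit.unit) (h := d⁄dX R (f + g)) ?_ ?_ ?_
  · rw [derivative_expPS hfg, mul_comm]
  · simp only [IsUnit.unit_spec, Derivation.leibniz, derivative_expPS hf, derivative_expPS hg,
      map_add, smul_eq_mul]
    ring
  · simp [constantCoeff_expPS]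

theorem expPS_sum {ι : Type*} (s : Finset ι) {f : ι → R⟦X⟧}
    (hf : ∀ i ∈ s, constantCoeff (f i) = 0) :
    expPS (∑ i ∈ s, f i) = ∏ i ∈ s, expPS (f i) := by
  induction s using Finset.cons_induction with
  | empty => ext k; rw [expPS, coeff_mk, sum_eq_single 0] <;> simp +contextual [coeff_one]
  | cons a s ha ih =>
    have hs : constantCoeff (∑ i ∈ s, f i) = 0 := by
      rw [map_sum]
      exact sum_eq_zero fun i hi => hf i (mem_cons_of_mem hi)
    rw [sum_cons, prod_cons, expPS_add (hf a (mem_cons_self a s)) hs,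
      ih fun i hi => hf i (mem_cons_of_mem hi)]

theorem rescale_expPS (a : R) (f : R⟦X⟧) : rescale a (expPS f) = expPS (rescale a f) := by
  ext k
  simp only [expPS, coeff_rescale, coeff_mk, mul_sum, ← map_pow, mul_smul_comm]

end Exp

/-- Let `R` be a commutative `ℚ`-algebra, `d : ℕ`, `λ₁, …, λ_d ∈ R`,
and `f ∈ R⟦X⟧` with constant coefficient `0`, so that `exp f` is defined.  With
`C := ∏ i, (1 - λᵢ X)` (a unit, with inverse `Cinv`) and `C'` its formal derivative,
`∏ i, (exp f)(λᵢ X) = exp (f ⊙ (-X * C' * C⁻¹))`,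
where `(exp f)(λX)` denotes the rescaled series and `⊙` the Hadamard product. -/
theorem statement2 (R : Type*) [CommRing R] [Algebra ℚ R] (d : ℕ) (lam : Fin d → R)
    (f C Cinv : PowerSeries R)
    (hf : PowerSeries.constantCoeff f = 0)
    (hC : C = ∏ i : Fin d, (1 - PowerSeries.C (lam i) * PowerSeries.X))
    (hCinv : C * Cinv = 1) :
    ∏ i : Fin d, PowerSeries.rescale (lam i) (expPS f) =
      expPS (hadamard f (-PowerSeries.X * derivativeFun C * Cinv)) := by
  change _ = expPS (hadamard f (-X * d⁄dX R C * Cinv))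
  have hlog : -X * d⁄dX R C * Cinv = ∑ i, (rescale (lam i) (mk 1) - 1) := by
    rw [mul_comm, hC, neg_X_mul_derivative_prod_one_sub_C_mul_X, ← mul_assoc, ← hC,
      mul_comm Cinv, hCinv, one_mul]
  calc ∏ i, rescale (lam i) (expPS f) = ∏ i, expPS (rescale (lam i) f) := by
        simp only [rescale_expPS]
    _ = expPS (∑ i, rescale (lam i) f) :=
        (expPS_sum _ fun i _ => by rw [constantCoeff_rescale, hf]).symm
    _ = expPS (hadamard f (-X * d⁄dX R C * Cinv)) := by
        simp only [hlog, hadamard_sum_right, hadamard_sub_right, hadamard_rescale_mk_one_right,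
          hadamard_one_right, hf, map_zero, sub_zero]
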